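/- arXiv:1204.6248 — 2 statements merged into one kernel-verified Lean document; each statement's English description precedes it below -/
import Mathlib

section
/- For every integer x ≥ 1, P(2x−1, 2x−1) = Σ_{j=0}^{x−1} ((2j−1)!! · (x−1)! · (2x−1)!! · (2x−2j−1) · (2x−2)!) / ((4x−3)!! · j! · (x−j−1)! · (2x−2j−1)!! · (2j)!), as an identity in ℚ. -/
/-- `P I S` is the probability that a fixed clean mobile gets infected in the
Bluetooth malware model with `I` infected and `S` clean mobiles. -/
def P : ℕ → ℕ → ℚ
  | 0, _ => 0
  | _ + 1, 0 => 0
  | I + 1, S + 1 =>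
      1 / ((I : ℚ) + S + 1) + ((S : ℚ) / ((I : ℚ) + S + 1)) * P I S +
        ((I : ℚ) / ((I : ℚ) + S + 1)) * P (I - 1) (S + 1)
  termination_by I _ => I

/-- Double factorial `n‼`; with natural subtraction as argument this also
implements the convention `(-1)‼ = 0‼ = 1`. -/
def dfact : ℕ → ℕ
  | 0 => 1
  | 1 => 1
  | n + 2 => (n + 2) * dfact n

/-!
For `i ≤ s` the recursion is solved by `P i s = i / (i + s - 1)`, so the left-hand side is
`(2m+1)/(4m+1)` with `x = m + 1`. Rewriting the double factorials through
`(2k-1)!! = (2k)! / (2^k k!)`, the `j`-th summand becomes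
`(2m+1)/(4m+1) · C(2m,j) C(2m-j,j) 4^(m-j) / C(4m,2m)`, and these binomial products sum to
`C(4m,2m)`: comparing coefficients of `X^n` in `(1+X)^(2n) = (1 + X(X+2))^n` gives
`∑ C(n,j) C(n-j,j) 2^(n-2j) = C(2n,n)`.
-/

theorem P_succ_succ (I S : ℕ) :
    P (I + 1) (S + 1) =
      1 / ((I : ℚ) + S + 1) + ((S : ℚ) / ((I : ℚ) + S + 1)) * P I S +
        ((I : ℚ) / ((I : ℚ) + S + 1)) * P (I - 1) (S + 1) := by
  rw [P]

theorem P_eq_div_of_le : ∀ {i s : ℕ}, i ≤ s → P i s = i / (i + s - 1)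
  | 0, s, _ => by simp [P]
  | 1, s + 1, _ => by simp [P_succ_succ, P]
  | I + 2, S + 1, h => by
    rw [P_succ_succ, Nat.add_sub_cancel, P_eq_div_of_le (by omega : I + 1 ≤ S),
      P_eq_div_of_le (by omega : I ≤ S + 1)]
    have hIS : (I : ℚ) + S ≠ 0 := by norm_cast; omega
    push_cast
    rw [show (I : ℚ) + 1 + S - 1 = I + S by ring, show (I : ℚ) + (S + 1) - 1 = I + S by ring,
      show (I : ℚ) + 2 + (S + 1) - 1 = I + 1 + S + 1 by ring]
    field_simp
    ring
  | _ + 1, 0, h => absurd h (by omega)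

theorem dfact_two_mul_add_one (k : ℕ) : dfact (2 * k + 1) = (2 * k + 1) * dfact (2 * k - 1) := by
  cases k with
  | zero => rfl
  | succ k => rw [show 2 * (k + 1) + 1 = 2 * k + 1 + 2 by ring, dfact]; rfl

open Nat in
theorem dfact_two_mul_sub_one_mul (k : ℕ) : dfact (2 * k - 1) * (2 ^ k * k !) = (2 * k)! := by
  induction k with
  | zero => rfl
  | succ k ih =>
    rw [show 2 * (k + 1) - 1 = 2 * k + 1 by omega, dfact_two_mul_add_one,
      show 2 * (k + 1) = 2 * k + 1 + 1 by ring, factorial_succ (2 * k + 1), factorial_succ (2 * k),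
      factorial_succ k, ← ih]
    ring

open Nat in
theorem dfact_two_mul_sub_one_eq (k : ℕ) :
    (dfact (2 * k - 1) : ℚ) = (2 * k)! / (2 ^ k * k !) := by
  rw [eq_div_iff (by positivity)]
  exact_mod_cast dfact_two_mul_sub_one_mul k

open Polynomial in
theorem sum_choose_mul_choose_mul_two_pow (n : ℕ) :
    ∑ j ∈ Finset.range (n + 1), n.choose j * (n - j).choose j * 2 ^ (n - 2 * j) =
      (2 * n).choose n := by
  have hsq : (X + 1 : ℕ[X]) ^ (2 * n) = (1 + X * (X + C 2)) ^ n := by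
    rw [pow_mul, C_ofNat]; ring
  rw [← Nat.cast_id ((2 * n).choose n), ← coeff_X_add_one_pow, hsq, add_pow, finsetSum_coeff]
  refine Finset.sum_congr rfl fun j hj => ?_
  have hjn : j ≤ n := Finset.mem_range_succ_iff.mp hj
  rw [one_pow, one_mul, ← C_eq_natCast, coeff_mul_C, mul_pow, coeff_X_pow_mul',
    if_pos (Nat.sub_le n j), Nat.sub_sub_self hjn, coeff_X_add_C_pow,
    show n - j - j = n - 2 * j by omega, Nat.cast_id, Nat.cast_id]
  ring

theorem sum_range_succ_choose_two_mul_mul_choose (m : ℕ) :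
    ∑ j ∈ Finset.range (m + 1), (2 * m).choose j * (2 * m - j).choose j * 2 ^ (2 * m - 2 * j) =
      (4 * m).choose (2 * m) := by
  rw [show 4 * m = 2 * (2 * m) by ring, ← sum_choose_mul_choose_mul_two_pow]
  refine Finset.sum_subset (Finset.range_subset_range.mpr (by omega)) fun j hj hjm => ?_
  simp only [Finset.mem_range] at hj hjm
  rw [Nat.choose_eq_zero_of_lt (by omega : 2 * m - j < j), mul_zero, zero_mul]

open Nat in
theorem summand_eq_mul_choose_div_choose (m j : ℕ) (hj : j ≤ m) :
    ((dfact (2 * j - 1) : ℚ) * ((m + 1 - 1) ! : ℚ) * (dfact (2 * (m + 1) - 1) : ℚ) *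
          ((2 * (m + 1) - 2 * j - 1 : ℕ) : ℚ) * ((2 * (m + 1) - 2) ! : ℚ)) /
        ((dfact (4 * (m + 1) - 3) : ℚ) * (j ! : ℚ) * ((m + 1 - j - 1) ! : ℚ) *
          (dfact (2 * (m + 1) - 2 * j - 1) : ℚ) * ((2 * j) ! : ℚ)) =
      (2 * m + 1) / (4 * m + 1) *
        (((2 * m).choose j * (2 * m - j).choose j * 2 ^ (2 * m - 2 * j) : ℕ) : ℚ) /
          ((4 * m).choose (2 * m) : ℚ) := by
  obtain ⟨k, rfl⟩ : ∃ k, m = j + k := ⟨m - j, by omega⟩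
  rw [show 2 * (j + k + 1) - 1 = 2 * (j + k) + 1 by omega,
    show 2 * (j + k + 1) - 2 * j - 1 = 2 * k + 1 by omega,
    show 2 * (j + k + 1) - 2 = 2 * (j + k) by omega,
    show 4 * (j + k + 1) - 3 = 2 * (2 * (j + k)) + 1 by omega,
    show j + k + 1 - 1 = j + k by omega, show j + k + 1 - j - 1 = k by omega,
    show 2 * (j + k) - 2 * j = 2 * k by omega]
  simp only [dfact_two_mul_add_one, Nat.cast_mul, dfact_two_mul_sub_one_eq]
  rw [Nat.cast_choose ℚ (by omega : j ≤ 2 * (j + k)),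
    Nat.cast_choose ℚ (by omega : j ≤ 2 * (j + k) - j),
    Nat.cast_choose ℚ (by omega : 2 * (j + k) ≤ 4 * (j + k)),
    show 2 * (j + k) - j - j = 2 * k by omega,
    show 4 * (j + k) - 2 * (j + k) = 2 * (j + k) by omega,
    show 2 * (2 * (j + k)) = 4 * (j + k) by ring]
  push_cast
  field_simp
  ring

open Nat in
theorem stmt_3_general (x : ℕ) :
    P (2 * x - 1) (2 * x - 1) =
      ∑ j ∈ Finset.range x,
        ((dfact (2 * j - 1) : ℚ) * ((x - 1) ! : ℚ) * (dfact (2 * x - 1) : ℚ) *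
            ((2 * x - 2 * j - 1 : ℕ) : ℚ) * ((2 * x - 2) ! : ℚ)) /
          ((dfact (4 * x - 3) : ℚ) * (j ! : ℚ) * ((x - j - 1) ! : ℚ) *
            (dfact (2 * x - 2 * j - 1) : ℚ) * ((2 * j) ! : ℚ)) := by
  rcases x with _ | m
  · simp [P]
  have hC : ((4 * m).choose (2 * m) : ℚ) ≠ 0 :=
    Nat.cast_ne_zero.mpr (Nat.choose_pos (by omega)).ne'
  rw [Finset.sum_congr rfl fun j hj =>
      summand_eq_mul_choose_div_choose m j (Finset.mem_range_succ_iff.mp hj),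
    ← Finset.sum_div, ← Finset.mul_sum, ← Nat.cast_sum,
    sum_range_succ_choose_two_mul_mul_choose,
    mul_div_assoc, div_self hC, mul_one, show 2 * (m + 1) - 1 = 2 * m + 1 by omega,
    P_eq_div_of_le le_rfl]
  push_cast
  ring

open Nat in
/-- Closed form for `P (2x-1) (2x-1)`. -/
theorem stmt_3 (x : ℕ) (hx : 1 ≤ x) :
    P (2 * x - 1) (2 * x - 1) =
      ∑ j ∈ Finset.range x,
        ((dfact (2 * j - 1) : ℚ) * ((x - 1) ! : ℚ) * (dfact (2 * x - 1) : ℚ) *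
            ((2 * x - 2 * j - 1 : ℕ) : ℚ) * ((2 * x - 2) ! : ℚ)) /
          ((dfact (4 * x - 3) : ℚ) * (j ! : ℚ) * ((x - j - 1) ! : ℚ) *
            (dfact (2 * x - 2 * j - 1) : ℚ) * ((2 * j) ! : ℚ)) :=
  stmt_3_general x
end

section
/- For all integers I ≥ 1 and S ≥ 1 such that I ≤ S or I + S is even, Σ_{j=L}^{⌊I/2⌋} (∏_{k=0}^{I−j−1} 1/(I+S−1−2k)) · ((1/j!)·∏_{k=1}^{j} C(I−2(k−1),2)) · (S! / (S−I+2j)!) = 1, where L = (I−S)/2 if I > S and L = 0 otherwise. -/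
/-!
Pair the infected mobiles one at a time, each with a partner chosen uniformly among the mobiles
still unpaired. A wiring with `j` infected–infected pairs is produced in `I - j` steps, so it has
probability `∏_{k < I - j} 1 / (I + S - 1 - 2k)`, and there are `C(I, 2j) (2j - 1)!! · S!/(S - I + 2j)!`
such wirings. Conditioning on the partner of the first infected mobile (infected with probability
`(I - 1)/(I + S - 1)`, clean with probability `S/(I + S - 1)`) gives a recursion for the total in
which both branches again have total `1`, by induction on `I`. The hypothesis keeps the process
from ever reaching a single infected mobile with no partner left, where `I + S - 1 = 0`.
-/

open Nat Finset

def matchingCount (n j : ℕ) : ℕ := n.choose (2 * j) * (2 * j - 1)‼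

lemma matchingCount_zero_right (n : ℕ) : matchingCount n 0 = 1 := by
  simp [matchingCount]

lemma matchingCount_eq_zero_of_lt {n j : ℕ} (h : n < 2 * j) : matchingCount n j = 0 := by
  simp [matchingCount, choose_eq_zero_of_lt h]

lemma matchingCount_add_two_add_one (n j : ℕ) :
    matchingCount (n + 2) (j + 1) = (n + 1) * matchingCount n j + matchingCount (n + 1) (j + 1) := by
  have h := add_one_mul_choose_eq n (2 * j)
  simp only [matchingCount, show 2 * (j + 1) = 2 * j + 1 + 1 by ring, choose_succ_succ' (n + 1),
    Nat.add_sub_cancel, doubleFactorial_add_one]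
  rw [← mul_assoc (n + 1), h]
  ring

lemma choose_two_mul_add_two_two (j : ℕ) : (2 * j + 2).choose 2 = (j + 1) * (2 * j + 1) := by
  rw [choose_two_right, show (2 * j + 2) * (2 * j + 2 - 1) = 2 * ((j + 1) * (2 * j + 1)) by
    rw [show 2 * j + 2 - 1 = 2 * j + 1 by omega]; ring]
  exact Nat.mul_div_cancel_left _ two_pos

lemma prod_choose_two_sub_two_mul (n j : ℕ) :
    ∏ k ∈ range j, (n - 2 * k).choose 2 = j ! * matchingCount n j := by
  induction j with
  | zero => simp [matchingCount]
  | succ j ih =>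
    have h := choose_mul (n := n) (k := 2 * j + 2) (s := 2 * j) (by omega)
    rw [Nat.add_sub_cancel_left, choose_symm_add, choose_two_mul_add_two_two] at h
    rw [prod_range_succ, ih, factorial_succ]
    simp only [matchingCount, show 2 * (j + 1) = 2 * j + 2 by ring,
      show 2 * j + 2 - 1 = 2 * j + 1 by omega, doubleFactorial_add_one]
    calc j ! * (n.choose (2 * j) * (2 * j - 1)‼) * (n - 2 * j).choose 2
        = j ! * (2 * j - 1)‼ * (n.choose (2 * j) * (n - 2 * j).choose 2) := by ring
      _ = _ := by rw [← h]; ring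

def pairingSeqProb (N m : ℕ) : ℚ := ∏ k ∈ range m, 1 / ((N : ℚ) - 1 - 2 * k)

lemma pairingSeqProb_add_two_succ (N m : ℕ) :
    pairingSeqProb (N + 2) (m + 1) = 1 / (N + 1) * pairingSeqProb N m := by
  simp only [pairingSeqProb, prod_range_succ']
  rw [mul_comm]
  congr 1
  · push_cast; ring_nf
  · exact prod_congr rfl fun k _ => by push_cast; ring_nf

lemma add_one_mul_pairingSeqProb_add_two_succ (N m : ℕ) :
    ((N + 1 : ℕ) : ℚ) * pairingSeqProb (N + 2) (m + 1) = pairingSeqProb N m := by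
  rw [pairingSeqProb_add_two_succ, ← mul_assoc]
  push_cast
  rw [mul_one_div_cancel (by positivity), one_mul]

lemma mul_descFactorial_sub_one (n k : ℕ) :
    n * (n - 1).descFactorial k = n.descFactorial (k + 1) := by
  cases n with
  | zero => simp
  | succ n => rw [Nat.add_sub_cancel, succ_descFactorial_succ]

def wiringWeight (I S j : ℕ) : ℚ :=
  pairingSeqProb (I + S) (I - j) * matchingCount I j * S.descFactorial (I - 2 * j)

lemma wiringWeight_eq_zero_of_lt {I S j : ℕ} (h : I < 2 * j) : wiringWeight I S j = 0 := by
  simp [wiringWeight, matchingCount_eq_zero_of_lt h]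

lemma mul_wiringWeight_add_one_sub_one (i S j : ℕ) :
    (S : ℚ) * wiringWeight (i + 1) (S - 1) j =
      pairingSeqProb (i + S) (i + 1 - j) * matchingCount (i + 1) j *
        S.descFactorial (i + 1 - 2 * j + 1) := by
  rw [← mul_descFactorial_sub_one]
  rcases S with _ | s
  · simp
  · simp only [wiringWeight, Nat.add_sub_cancel, show i + 1 + s = i + (s + 1) by ring]
    push_cast
    ring

lemma add_mul_wiringWeight_add_two_zero (i S : ℕ) :
    ((i + S + 1 : ℕ) : ℚ) * wiringWeight (i + 2) S 0 = S * wiringWeight (i + 1) (S - 1) 0 := by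
  rw [mul_wiringWeight_add_one_sub_one, wiringWeight, show i + 2 + S = i + S + 2 by ring,
    ← mul_assoc, ← mul_assoc, Nat.sub_zero, add_one_mul_pairingSeqProb_add_two_succ]
  simp [matchingCount_zero_right]

lemma add_mul_wiringWeight_add_two_succ (i S j : ℕ) :
    ((i + S + 1 : ℕ) : ℚ) * wiringWeight (i + 2) S (j + 1) =
      (i + 1) * wiringWeight i S j + S * wiringWeight (i + 1) (S - 1) (j + 1) := by
  rcases lt_or_ge i (2 * j) with hij | hij
  · simp [wiringWeight_eq_zero_of_lt, hij, mul_wiringWeight_add_one_sub_one,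
      wiringWeight_eq_zero_of_lt (show i + 2 < 2 * (j + 1) by omega),
      matchingCount_eq_zero_of_lt (show i + 1 < 2 * (j + 1) by omega)]
  have hdesc : (matchingCount (i + 1) (j + 1) : ℚ) * S.descFactorial (i + 1 - 2 * (j + 1) + 1) =
      matchingCount (i + 1) (j + 1) * S.descFactorial (i - 2 * j) := by
    rcases eq_or_lt_of_le hij with hij | hij
    · simp [matchingCount_eq_zero_of_lt (show i + 1 < 2 * (j + 1) by omega)]
    · rw [show i + 1 - 2 * (j + 1) + 1 = i - 2 * j by omega]
  rw [mul_wiringWeight_add_one_sub_one, wiringWeight, wiringWeight,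
    show i + 2 + S = i + S + 2 by ring, show i + 2 - (j + 1) = i - j + 1 by omega,
    show i + 2 - 2 * (j + 1) = i - 2 * j by omega, show i + 1 - (j + 1) = i - j by omega,
    ← mul_assoc, ← mul_assoc, add_one_mul_pairingSeqProb_add_two_succ,
    mul_assoc (pairingSeqProb (i + S) (i - j)) (matchingCount (i + 1) (j + 1) : ℚ), hdesc,
    matchingCount_add_two_add_one]
  push_cast
  ring

def wiringTotal (I S : ℕ) : ℚ := ∑ j ∈ range (I + 1), wiringWeight I S j

lemma sum_range_add_two_wiringWeight (I S : ℕ) :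
    ∑ j ∈ range (I + 2), wiringWeight I S j = wiringTotal I S := by
  rw [sum_range_succ, wiringWeight_eq_zero_of_lt (by omega), add_zero, wiringTotal]

lemma add_mul_wiringTotal_add_two (i S : ℕ) :
    ((i + S + 1 : ℕ) : ℚ) * wiringTotal (i + 2) S =
      (i + 1) * wiringTotal i S + S * wiringTotal (i + 1) (S - 1) := by
  rw [wiringTotal, sum_range_succ', mul_add, mul_sum,
    sum_congr rfl fun j _ => add_mul_wiringWeight_add_two_succ i S j,
    add_mul_wiringWeight_add_two_zero, sum_add_distrib, ← mul_sum, ← mul_sum, add_assoc, ← mul_add,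
    ← sum_range_succ' (fun j => wiringWeight (i + 1) (S - 1) j), sum_range_add_two_wiringWeight,
    sum_range_add_two_wiringWeight]

theorem wiringTotal_eq_one (I S : ℕ) (h : I ≤ S ∨ Even (I + S)) : wiringTotal I S = 1 := by
  simp only [Nat.even_iff] at h
  induction I using Nat.twoStepInduction generalizing S with
  | zero => simp [wiringTotal, wiringWeight, pairingSeqProb, matchingCount_zero_right]
  | one =>
    have hS : (S : ℚ) ≠ 0 := by norm_cast; omega
    rw [wiringTotal, sum_range_succ, wiringWeight_eq_zero_of_lt (by norm_num)]
    simp [wiringWeight, pairingSeqProb, matchingCount_zero_right, hS]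
  | more i ih₀ ih₁ =>
    have hS : (S : ℚ) * wiringTotal (i + 1) (S - 1) = S := by
      rcases S with _ | s
      · simp
      · rw [Nat.add_sub_cancel, ih₁ s (by omega), mul_one]
    have hrec := add_mul_wiringTotal_add_two i S
    rw [ih₀ S (by omega), hS] at hrec
    refine mul_left_cancel₀ (Nat.cast_ne_zero.mpr (by omega : i + S + 1 ≠ 0)) ?_
    rw [hrec]
    push_cast
    ring

lemma wiringWeight_eq_factorial_div {I S j : ℕ} (hj : 2 * j ≤ I) (hS : I - 2 * j ≤ S) :
    wiringWeight I S j =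
      (∏ k ∈ range (I - j), (1 / ((I : ℚ) + (S : ℚ) - 1 - 2 * (k : ℚ)))) *
        ((1 / (j ! : ℚ)) * ∏ k ∈ range j, ((I - 2 * k).choose 2 : ℚ)) *
        ((S ! : ℚ) / ((S + 2 * j - I) ! : ℚ)) := by
  have hfact := factorial_mul_descFactorial hS
  rw [show S - (I - 2 * j) = S + 2 * j - I by omega] at hfact
  rw [← Nat.cast_prod, prod_choose_two_sub_two_mul, ← hfact, wiringWeight, pairingSeqProb]
  push_cast
  field_simp

open Nat in
theorem stmt_9_general (I S : ℕ) (h : I ≤ S ∨ Even (I + S)) :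
    ∑ j ∈ Finset.Icc (if S < I then (I - S) / 2 else 0) (I / 2),
      (∏ k ∈ Finset.range (I - j), (1 / ((I : ℚ) + (S : ℚ) - 1 - 2 * (k : ℚ)))) *
        ((1 / (j ! : ℚ)) * ∏ k ∈ Finset.range j, ((I - 2 * k).choose 2 : ℚ)) *
        ((S ! : ℚ) / ((S + 2 * j - I) ! : ℚ)) = 1 := by
  have hpar : I ≤ S ∨ (I + S) % 2 = 0 := by simpa only [Nat.even_iff] using h
  refine (sum_subset_zero_on_sdiff ?_ ?_ ?_).trans (wiringTotal_eq_one I S h)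
  · intro j hj
    simp only [mem_Icc, mem_range] at hj ⊢
    omega
  · intro j hj
    simp only [mem_sdiff, mem_Icc, mem_range] at hj
    rcases lt_or_ge I (2 * j) with hjI | hjI
    · exact wiringWeight_eq_zero_of_lt hjI
    · have : S < I - 2 * j := by split_ifs at hj <;> omega
      simp [wiringWeight, descFactorial_eq_zero_iff_lt.mpr this]
  · intro j hj
    simp only [mem_Icc] at hj
    exact (wiringWeight_eq_factorial_div (by omega) (by split_ifs at hj <;> omega)).symm

open Nat in
/-- The probabilities of all possible wirings, classified by the number `j` of
pairings between two infected mobiles, sum to one. -/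
theorem stmt_9 (I S : ℕ) (hI : 1 ≤ I) (hS : 1 ≤ S) (h : I ≤ S ∨ Even (I + S)) :
    ∑ j ∈ Finset.Icc (if S < I then (I - S) / 2 else 0) (I / 2),
      (∏ k ∈ Finset.range (I - j), (1 / ((I : ℚ) + (S : ℚ) - 1 - 2 * (k : ℚ)))) *
        ((1 / (j ! : ℚ)) * ∏ k ∈ Finset.range j, ((I - 2 * k).choose 2 : ℚ)) *
        ((S ! : ℚ) / ((S + 2 * j - I) ! : ℚ)) = 1 :=
  stmt_9_general I S h
end
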